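/- Let s ∈ (0,1), and let Ω ⊂ ℝᴺ be open and symmetric with respect to the hyperplane {x_N = 0}; set Ω₊ = {x ∈ Ω : x_N > 0}. Given u ∈ W^sL_{Φ_{x,y}}(Ω₊), define ũ(x', x_N) = u(x', x_N) for x_N ≥ 0 and ũ(x', x_N) = u(x', −x_N) for x_N < 0 (even reflection). Then ũ ∈ W^sL_{Φ_{x,y}}(Ω); moreover the Gagliardo-type modular of ũ over Ω×Ω is at most 4 times that of u over Ω₊×Ω₊ (assuming Φ symmetric under the reflection). -/
import Mathlib


open Real MeasureTheory ENNReal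

/-- Model `ℝ^{N+1}` as `ℝᴺ × ℝ`, the last coordinate being distinguished. -/
abbrev HalfSpaceModel (N : ℕ) := EuclideanSpace ℝ (Fin N) × ℝ

/-- Reflection in the hyperplane `{x_{N+1} = 0}`. -/
def reflLast (N : ℕ) (p : HalfSpaceModel N) : HalfSpaceModel N := (p.1, -p.2)

/-- The Gagliardo-type modular on a subset of `ℝᴺ × ℝ` (dimension `N + 1`). -/
noncomputable def fracModularP (N : ℕ)
    (Φ : HalfSpaceModel N → HalfSpaceModel N → ℝ → ℝ) (s : ℝ)
    (A : Set (HalfSpaceModel N)) (u : HalfSpaceModel N → ℝ) : ℝ≥0∞ :=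
  ∫⁻ x in A, ∫⁻ y in A,
    ENNReal.ofReal (Φ x y (|u x - u y| / ‖x - y‖ ^ s) / ‖x - y‖ ^ ((N : ℝ) + 1))

/-- Membership in `W^sL_{Φ_{x,y}}(A)`. -/
def memWP (N : ℕ)
    (Φ : HalfSpaceModel N → HalfSpaceModel N → ℝ → ℝ) (s : ℝ)
    (A : Set (HalfSpaceModel N)) (u : HalfSpaceModel N → ℝ) : Prop :=
  Measurable u ∧
    (∃ l : ℝ, 0 < l ∧ (∫⁻ x in A, ENNReal.ofReal (Φ x x (|u x| / l))) < ⊤) ∧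
    (∃ l : ℝ, 0 < l ∧ fracModularP N Φ s A (fun x => u x / l) < ⊤)

/-! ### Auxiliary lemmas -/

lemma reflLast_measurable (N : ℕ) : Measurable (reflLast N) :=
  measurable_fst.prodMk measurable_snd.neg

lemma reflLast_involutive (N : ℕ) (p : HalfSpaceModel N) :
    reflLast N (reflLast N p) = p := by
  simp [reflLast]

lemma reflLast_measurePreserving (N : ℕ) :
    MeasurePreserving (reflLast N) (volume : Measure (HalfSpaceModel N)) volume := by
  have h : MeasurePreserving (Prod.map (id : EuclideanSpace ℝ (Fin N) → _) (Neg.neg : ℝ → ℝ))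
      (volume.prod volume) (volume.prod volume) :=
    (MeasurePreserving.id volume).prod (Measure.measurePreserving_neg volume)
  have he : reflLast N = Prod.map (id : EuclideanSpace ℝ (Fin N) → _) (Neg.neg : ℝ → ℝ) := by
    funext p; rfl
  rw [Measure.volume_eq_prod, he]
  exact h

lemma reflLast_embedding (N : ℕ) : MeasurableEmbedding (reflLast N) :=
  MeasurableEquiv.measurableEmbedding
    { toFun := reflLast N
      invFun := reflLast N
      left_inv := reflLast_involutive N
      right_inv := reflLast_involutive N
      measurable_toFun := reflLast_measurable N
      measurable_invFun := reflLast_measurable N }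

lemma norm_reflLast_sub_le (N : ℕ) {x y : HalfSpaceModel N} (hx : x.2 ≤ 0) (hy : 0 ≤ y.2) :
    ‖reflLast N x - y‖ ≤ ‖x - y‖ := by
  have h1 : |(-x.2) - y.2| ≤ |x.2 - y.2| := by
    calc |(-x.2) - y.2| = |x.2 + y.2| := by rw [show -x.2 - y.2 = -(x.2+y.2) by ring, abs_neg]
    _ ≤ |x.2| + |y.2| := abs_add_le _ _
    _ = -x.2 + y.2 := by rw [abs_of_nonpos hx, abs_of_nonneg hy]
    _ ≤ |x.2 - y.2| := by rw [abs_sub_comm, abs_of_nonneg (by linarith)]; linarith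
  simp only [Prod.norm_def, reflLast, Prod.fst_sub, Prod.snd_sub]
  exact max_le_max le_rfl (by simpa [Real.norm_eq_abs] using h1)

lemma norm_reflLast_sub_reflLast (N : ℕ) (x y : HalfSpaceModel N) :
    ‖reflLast N x - reflLast N y‖ = ‖x - y‖ := by
  simp only [Prod.norm_def, reflLast, Prod.fst_sub, Prod.snd_sub, Real.norm_eq_abs]
  rw [show -x.2 - -y.2 = -(x.2 - y.2) by ring, abs_neg]

lemma key_ofReal (φ : ℝ → ℝ) (hmono : Monotone φ) (hnn : ∀ t, 0 ≤ φ t) (h0 : φ 0 = 0)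
    {s c : ℝ} (hs : 0 < s) (hc : 0 < c) {a r r' : ℝ} (hr' : 0 ≤ r') (hle : r' ≤ r)
    (ha : r' = 0 → a = 0) :
    ENNReal.ofReal (φ (|a| / r ^ s) / r ^ c) ≤ ENNReal.ofReal (φ (|a| / r' ^ s) / r' ^ c) := by
  rcases eq_or_lt_of_le hr' with h | h
  · have haz : a = 0 := ha h.symm
    have hz : φ (|a| / r ^ s) / r ^ c = 0 := by simp [haz, h0]
    rw [hz]
    simp
  · have hr : (0:ℝ) < r := lt_of_lt_of_le h hle
    have h3 : |a| / r ^ s ≤ |a| / r' ^ s := by gcongr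
    refine ENNReal.ofReal_le_ofReal ?_
    exact div_le_div₀ (hnn _) (hmono h3) (Real.rpow_pos_of_pos h c)
      (Real.rpow_le_rpow h.le hle hc.le)

set_option maxHeartbeats 1000000 in
/-- even reflection across `{x_N = 0}` maps `W^sL_{Φ_{x,y}}(Ω₊)` into
`W^sL_{Φ_{x,y}}(Ω)` for `Ω` symmetric in the last coordinate, and the Gagliardo-type
modular of the reflected function over `Ω×Ω` is at most `4` times that of `u` over
`Ω₊×Ω₊` (with `Φ` invariant under the reflection). -/
theorem even_reflection (N : ℕ)
    (Φ : HalfSpaceModel N → HalfSpaceModel N → ℝ → ℝ)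
    (s : ℝ) (hs0 : 0 < s) (hs1 : s < 1)
    (Ω : Set (HalfSpaceModel N)) (hΩo : IsOpen Ω)
    (hsym : ∀ p, p ∈ Ω ↔ reflLast N p ∈ Ω)
    (hΦmono : ∀ x y, Monotone (Φ x y)) (hΦ0 : ∀ x y, Φ x y 0 = 0)
    (hΦnn : ∀ x y t, 0 ≤ Φ x y t)
    (hΦinv₁ : ∀ x y t, Φ (reflLast N x) y t = Φ x y t)
    (hΦinv₂ : ∀ x y t, Φ x (reflLast N y) t = Φ x y t)
    (u : HalfSpaceModel N → ℝ)
    (hu : memWP N Φ s {p ∈ Ω | 0 < p.2} u) :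
    memWP N Φ s Ω (fun p => if 0 ≤ p.2 then u p else u (reflLast N p)) ∧
      ∀ l : ℝ, 0 < l →
        fracModularP N Φ s Ω
            (fun p => (if 0 ≤ p.2 then u p else u (reflLast N p)) / l) ≤
          4 * fracModularP N Φ s {p ∈ Ω | 0 < p.2} (fun p => u p / l) := by
  have hc : (0:ℝ) < (N:ℝ) + 1 := by positivity
  set R := reflLast N with hRdef
  set Ωp : Set (HalfSpaceModel N) := {p ∈ Ω | 0 < p.2} with hΩpdef
  set Ωm : Set (HalfSpaceModel N) := R ⁻¹' Ωp with hΩmdef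
  have hΩpm : MeasurableSet Ωp :=
    hΩo.measurableSet.inter (measurableSet_lt measurable_const measurable_snd)
  have hΩmm : MeasurableSet Ωm := hΩpm.preimage (reflLast_measurable N)
  have hmemm : ∀ p, p ∈ Ωm ↔ (p ∈ Ω ∧ p.2 < 0) := by
    intro p
    constructor
    · rintro ⟨h1, h2⟩
      refine ⟨(hsym p).mpr h1, ?_⟩
      simpa [R, reflLast] using h2
    · rintro ⟨h1, h2⟩
      refine ⟨(hsym p).mp h1, ?_⟩
      simpa [R, reflLast] using h2
  -- splitting of the restricted measure
  have hzero : volume {p : HalfSpaceModel N | p.2 = 0} = 0 := by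
    have : {p : HalfSpaceModel N | p.2 = 0}
        = (Set.univ : Set (EuclideanSpace ℝ (Fin N))) ×ˢ ({0} : Set ℝ) := by
      ext p
      simp only [Set.mem_prod, Set.mem_univ, true_and, Set.mem_singleton_iff, Set.mem_setOf_eq]
    rw [this, Measure.volume_eq_prod, Measure.prod_prod, Real.volume_singleton, mul_zero]
  have hsplit : ∀ f : HalfSpaceModel N → ℝ≥0∞,
      (∫⁻ p in Ω, f p) ≤ (∫⁻ p in Ωp, f p) + ∫⁻ p in Ωm, f p := by
    have hsub : Ω ⊆ (Ωp ∪ Ωm) ∪ {p | p.2 = 0} := by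
      intro p hp
      rcases lt_trichotomy p.2 0 with h | h | h
      · exact Or.inl (Or.inr ((hmemm p).mpr ⟨hp, h⟩))
      · exact Or.inr h
      · exact Or.inl (Or.inl ⟨hp, h⟩)
    intro f
    calc (∫⁻ p in Ω, f p) ≤ ∫⁻ p in (Ωp ∪ Ωm) ∪ {p | p.2 = 0}, f p := lintegral_mono_set hsub
    _ ≤ (∫⁻ p in Ωp ∪ Ωm, f p) + ∫⁻ p in {p | p.2 = 0}, f p := lintegral_union_le _ _ _
    _ = ∫⁻ p in Ωp ∪ Ωm, f p := by rw [setLIntegral_measure_zero _ _ hzero, add_zero]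
    _ ≤ (∫⁻ p in Ωp, f p) + ∫⁻ p in Ωm, f p := lintegral_union_le _ _ _
  have hcov : ∀ f : HalfSpaceModel N → ℝ≥0∞,
      (∫⁻ p in Ωm, f (R p)) = ∫⁻ p in Ωp, f p := fun f =>
    (reflLast_measurePreserving N).setLIntegral_comp_preimage_emb (reflLast_embedding N) f Ωp
  -- the reflected function
  set ut : HalfSpaceModel N → ℝ := fun p => if 0 ≤ p.2 then u p else u (R p) with hut
  have hmeas_ut : Measurable ut :=
    Measurable.ite (measurableSet_le measurable_const measurable_snd) hu.1
      (hu.1.comp (reflLast_measurable N))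
  have hut_pos : ∀ p : HalfSpaceModel N, 0 ≤ p.2 → ut p = u p := fun p hp => if_pos hp
  have hut_neg : ∀ p : HalfSpaceModel N, p.2 < 0 → ut p = u (R p) := fun p hp =>
    if_neg (not_le.mpr hp)
  -- main modular inequality
  have main : ∀ l : ℝ, 0 < l →
      fracModularP N Φ s Ω (fun p => ut p / l) ≤
        4 * fracModularP N Φ s Ωp (fun p => u p / l) := by
    intro l hl
    set w : HalfSpaceModel N → ℝ := fun p => u p / l with hw
    set v : HalfSpaceModel N → ℝ := fun p => ut p / l with hv
    set gv : HalfSpaceModel N → HalfSpaceModel N → ℝ≥0∞ := fun x y =>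
      ENNReal.ofReal (Φ x y (|v x - v y| / ‖x - y‖ ^ s) / ‖x - y‖ ^ ((N : ℝ) + 1)) with hgv
    set gw : HalfSpaceModel N → HalfSpaceModel N → ℝ≥0∞ := fun x y =>
      ENNReal.ofReal (Φ x y (|w x - w y| / ‖x - y‖ ^ s) / ‖x - y‖ ^ ((N : ℝ) + 1)) with hgw
    set Hw : HalfSpaceModel N → ℝ≥0∞ := fun x => ∫⁻ y in Ωp, gw x y with hHw
    have hM : fracModularP N Φ s Ωp w = ∫⁻ x in Ωp, Hw x := rfl
    -- generic comparison of integrands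
    have hcomp : ∀ x y x' y' : HalfSpaceModel N, v x - v y = w x' - w y' →
        (∀ t, Φ x y t = Φ x' y' t) → ‖x' - y'‖ ≤ ‖x - y‖ → gv x y ≤ gw x' y' := by
      intro x y x' y' hval hphi hle
      simp only [hgv, hgw, hval, hphi]
      refine key_ofReal (Φ x' y') (hΦmono _ _) (hΦnn _ _) (hΦ0 _ _) hs0 hc (norm_nonneg _)
        hle ?_
      intro h
      have : x' = y' := by rwa [norm_sub_eq_zero_iff] at h
      rw [this, sub_self]
    have hvp : ∀ p ∈ Ωp, v p = w p := by
      intro p hp; simp only [hv, hw, hut_pos p hp.2.le]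
    have hvm : ∀ p ∈ Ωm, v p = w (R p) := by
      intro p hp; simp only [hv, hw, hut_neg p ((hmemm p).mp hp).2]
    -- inner bound for x ∈ Ωp
    have hFp : ∀ x ∈ Ωp, (∫⁻ y in Ω, gv x y) ≤ 2 * Hw x := by
      intro x hx
      have h2 : (∫⁻ y in Ωp, gv x y) ≤ Hw x := by
        refine lintegral_mono_ae (((ae_restrict_mem hΩpm).mono ?_))
        intro y hy
        exact hcomp x y x y (by rw [hvp x hx, hvp y hy]) (fun t => rfl) le_rfl
      have h3 : (∫⁻ y in Ωm, gv x y) ≤ Hw x := by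
        have : (∫⁻ y in Ωm, gv x y) ≤ ∫⁻ y in Ωm, gw x (R y) := by
          refine lintegral_mono_ae (((ae_restrict_mem hΩmm).mono ?_))
          intro y hy
          refine hcomp x y x (R y) (by rw [hvp x hx, hvm y hy]) (fun t => (hΦinv₂ x y t).symm) ?_
          calc ‖x - R y‖ = ‖R y - x‖ := norm_sub_rev _ _
          _ ≤ ‖y - x‖ := norm_reflLast_sub_le N ((hmemm y).mp hy).2.le hx.2.le
          _ = ‖x - y‖ := norm_sub_rev _ _
        exact this.trans (le_of_eq (hcov (fun y => gw x y)))
      calc (∫⁻ y in Ω, gv x y) ≤ (∫⁻ y in Ωp, gv x y) + ∫⁻ y in Ωm, gv x y := hsplit _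
      _ ≤ Hw x + Hw x := add_le_add h2 h3
      _ = 2 * Hw x := (two_mul _).symm
    -- inner bound for x ∈ Ωm
    have hFm : ∀ x ∈ Ωm, (∫⁻ y in Ω, gv x y) ≤ 2 * Hw (R x) := by
      intro x hx
      have hx2 : x.2 < 0 := ((hmemm x).mp hx).2
      have h2 : (∫⁻ y in Ωp, gv x y) ≤ Hw (R x) := by
        refine lintegral_mono_ae (((ae_restrict_mem hΩpm).mono ?_))
        intro y hy
        refine hcomp x y (R x) y (by rw [hvm x hx, hvp y hy]) (fun t => (hΦinv₁ x y t).symm) ?_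
        exact norm_reflLast_sub_le N hx2.le hy.2.le
      have h3 : (∫⁻ y in Ωm, gv x y) ≤ Hw (R x) := by
        have : (∫⁻ y in Ωm, gv x y) ≤ ∫⁻ y in Ωm, gw (R x) (R y) := by
          refine lintegral_mono_ae (((ae_restrict_mem hΩmm).mono ?_))
          intro y hy
          refine hcomp x y (R x) (R y) (by rw [hvm x hx, hvm y hy]) ?_ ?_
          · intro t; rw [hΦinv₂ (R x) y t, hΦinv₁ x y t]
          · exact le_of_eq (norm_reflLast_sub_reflLast N x y)
        exact this.trans (le_of_eq (hcov (fun y => gw (R x) y)))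
      calc (∫⁻ y in Ω, gv x y) ≤ (∫⁻ y in Ωp, gv x y) + ∫⁻ y in Ωm, gv x y := hsplit _
      _ ≤ Hw (R x) + Hw (R x) := add_le_add h2 h3
      _ = 2 * Hw (R x) := (two_mul _).symm
    -- assemble
    have b1 : (∫⁻ x in Ωp, ∫⁻ y in Ω, gv x y) ≤ 2 * fracModularP N Φ s Ωp w := by
      calc (∫⁻ x in Ωp, ∫⁻ y in Ω, gv x y) ≤ ∫⁻ x in Ωp, 2 * Hw x :=
            lintegral_mono_ae (((ae_restrict_mem hΩpm).mono fun x hx => hFp x hx))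
      _ = 2 * ∫⁻ x in Ωp, Hw x := lintegral_const_mul' 2 _ (by simp)
      _ = 2 * fracModularP N Φ s Ωp w := by rw [hM]
    have b2 : (∫⁻ x in Ωm, ∫⁻ y in Ω, gv x y) ≤ 2 * fracModularP N Φ s Ωp w := by
      calc (∫⁻ x in Ωm, ∫⁻ y in Ω, gv x y) ≤ ∫⁻ x in Ωm, 2 * Hw (R x) :=
            lintegral_mono_ae (((ae_restrict_mem hΩmm).mono fun x hx => hFm x hx))
      _ = 2 * ∫⁻ x in Ωm, Hw (R x) := lintegral_const_mul' 2 _ (by simp)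
      _ = 2 * ∫⁻ x in Ωp, Hw x := by rw [hcov Hw]
      _ = 2 * fracModularP N Φ s Ωp w := by rw [hM]
    calc fracModularP N Φ s Ω v
        ≤ (∫⁻ x in Ωp, ∫⁻ y in Ω, gv x y) + ∫⁻ x in Ωm, ∫⁻ y in Ω, gv x y := hsplit _
    _ ≤ 2 * fracModularP N Φ s Ωp w + 2 * fracModularP N Φ s Ωp w := add_le_add b1 b2
    _ = 4 * fracModularP N Φ s Ωp w := by ring
  refine ⟨⟨hmeas_ut, ?_, ?_⟩, main⟩
  · -- L^Φ integrability
    obtain ⟨l, hl, hfin⟩ := hu.2.1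
    refine ⟨l, hl, ?_⟩
    set f : HalfSpaceModel N → ℝ≥0∞ := fun x => ENNReal.ofReal (Φ x x (|u x| / l)) with hf
    have h1 : (∫⁻ x in Ωp, ENNReal.ofReal (Φ x x (|ut x| / l))) ≤ ∫⁻ x in Ωp, f x := by
      refine lintegral_mono_ae (((ae_restrict_mem hΩpm).mono ?_))
      intro x hx
      rw [hut_pos x hx.2.le]
    have h2 : (∫⁻ x in Ωm, ENNReal.ofReal (Φ x x (|ut x| / l))) ≤ ∫⁻ x in Ωp, f x := by
      have : (∫⁻ x in Ωm, ENNReal.ofReal (Φ x x (|ut x| / l))) = ∫⁻ x in Ωm, f (R x) := by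
        refine lintegral_congr_ae (((ae_restrict_mem hΩmm).mono ?_))
        intro x hx
        show ENNReal.ofReal (Φ x x (|ut x| / l)) = f (R x)
        rw [hut_neg x ((hmemm x).mp hx).2, hf]
        have hphi : Φ x x (|u (R x)| / l) = Φ (R x) (R x) (|u (R x)| / l) := by
          rw [hΦinv₂ (R x) x, hΦinv₁ x x]
        rw [hphi]
      rw [this, hcov f]
    calc (∫⁻ x in Ω, ENNReal.ofReal (Φ x x (|ut x| / l)))
        ≤ (∫⁻ x in Ωp, ENNReal.ofReal (Φ x x (|ut x| / l)))
          + ∫⁻ x in Ωm, ENNReal.ofReal (Φ x x (|ut x| / l)) := hsplit _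
    _ ≤ (∫⁻ x in Ωp, f x) + ∫⁻ x in Ωp, f x := add_le_add h1 h2
    _ < ⊤ := ENNReal.add_lt_top.mpr ⟨hfin, hfin⟩
  · -- modular finiteness
    obtain ⟨l, hl, hfin⟩ := hu.2.2
    refine ⟨l, hl, lt_of_le_of_lt (main l hl) ?_⟩
    exact ENNReal.mul_lt_top (by simp) hfin
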